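/- Let A be a commutative ring and let 0 → A → N → P → 0 be a short exact sequence of free A-modules, with inclusion e: A → N and projection p: N → P. Then for every k ≥ 1 the induced sequence 0 → Sym^{k−1} N → Sym^k N → Sym^k P → 0 is exact, where the first map is multiplication by e(1) in the symmetric algebra (i.e. x ↦ e(1)·x) and the second map is Sym^k p. -/

import Mathlib

/-!
STATEMENT 4.  For a module `M` over a commutative ring `A`, the `k`-th symmetric power
`Sym^k M` is realised as the quotient of the `k`-th tensor power `M^{⊗k}` by the span of
the elements `v₁ ⊗ ⋯ ⊗ v_k − v_{σ(1)} ⊗ ⋯ ⊗ v_{σ(k)}` for permutations `σ`.  A linear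
map `p : M → N` induces `Sym^k p : Sym^k M → Sym^k N`, and an element `m₀ : M` induces
the multiplication map `m₀ · − : Sym^k M → Sym^{k+1} M` (insertion of `m₀`, i.e.
multiplication by `m₀` in the symmetric algebra).

Claim: if `0 → A → N → P → 0` is a short exact sequence of free `A`-modules with
inclusion `e` and projection `p`, then for every `k ≥ 1` the sequence
`0 → Sym^{k−1} N → Sym^k N → Sym^k P → 0` is exact: the first map (multiplication by
`e(1)`) is injective, the sequence is exact in the middle, and `Sym^k p` is surjective.
(Below the index `k : ℕ` ranges over all naturals and plays the role of `k − 1`.)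
-/

universe u v

namespace Stmt4

variable (A : Type u) [CommRing A]

section SymPow

variable (M : Type v) [AddCommGroup M] [Module A M]

/-- The submodule of symmetry relations in the `k`-th tensor power. -/
def symRel (k : ℕ) : Submodule A (PiTensorProduct A fun _ : Fin k => M) :=
  Submodule.span A
    {x | ∃ (v : Fin k → M) (σ : Equiv.Perm (Fin k)),
      x = PiTensorProduct.tprod A v - PiTensorProduct.tprod A (v ∘ σ)}

/-- The `k`-th symmetric power of a module: the degree-`k` component of its symmetric
algebra, realised as a quotient of the `k`-th tensor power. -/
abbrev SymPow (k : ℕ) := (PiTensorProduct A fun _ : Fin k => M) ⧸ symRel A M k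

variable {M} {N : Type v} [AddCommGroup N] [Module A N]

/-- Functoriality: the map `Sym^k p` induced by a linear map `p`. -/
noncomputable def symPowMap (p : M →ₗ[A] N) (k : ℕ) : SymPow A M k →ₗ[A] SymPow A N k :=
  Submodule.mapQ (symRel A M k) (symRel A N k) (PiTensorProduct.map fun _ => p) (by
    rw [symRel, Submodule.span_le]
    rintro x ⟨v, σ, rfl⟩
    simp only [SetLike.mem_coe, Submodule.mem_comap, map_sub, PiTensorProduct.map_tprod]
    exact Submodule.subset_span ⟨fun i => p (v i), σ, rfl⟩)

/-- Insertion of a fixed element `m₀` in the first slot of the tensor power. -/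
noncomputable def consTensor (m₀ : M) (k : ℕ) :
    (PiTensorProduct A fun _ : Fin k => M) →ₗ[A] PiTensorProduct A fun _ : Fin (k + 1) => M :=
  PiTensorProduct.lift ((PiTensorProduct.tprod A (s := fun _ : Fin (k + 1) => M)).curryLeft m₀)

lemma cons_comp_perm (m₀ : M) {k : ℕ} (v : Fin k → M) (σ : Equiv.Perm (Fin k)) :
    (Fin.cons m₀ v : Fin (k + 1) → M) ∘ (Equiv.Perm.decomposeFin.symm (0, σ)) =
      Fin.cons m₀ (v ∘ σ) := by
  funext i
  refine Fin.cases ?_ (fun j => ?_) i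
  · simp
  · simp [Equiv.Perm.decomposeFin_symm_apply_succ]

/-- Multiplication by `m₀` in the symmetric algebra, `Sym^k M → Sym^{k+1} M`. -/
noncomputable def symMulByElem (m₀ : M) (k : ℕ) : SymPow A M k →ₗ[A] SymPow A M (k + 1) :=
  Submodule.mapQ (symRel A M k) (symRel A M (k + 1)) (consTensor A m₀ k) (by
    rw [symRel, Submodule.span_le]
    rintro x ⟨v, σ, rfl⟩
    simp only [SetLike.mem_coe, Submodule.mem_comap, map_sub, consTensor,
      PiTensorProduct.lift.tprod, MultilinearMap.curryLeft_apply]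
    refine Submodule.subset_span
      ⟨Fin.cons m₀ v, Equiv.Perm.decomposeFin.symm (0, σ), ?_⟩
    rw [cons_comp_perm])

end SymPow

section Basic
variable {M : Type v} [AddCommGroup M] [Module A M] {N' : Type v} [AddCommGroup N'] [Module A N']

/-- Abbreviation for the quotient map onto the symmetric power. -/
noncomputable def symMk (M : Type v) [AddCommGroup M] [Module A M] (k : ℕ) : (PiTensorProduct A fun _ : Fin k => M) →ₗ[A] SymPow A M k :=
  (symRel A M k).mkQ

variable {A}

lemma symPowMap_mk (p : M →ₗ[A] N') (k : ℕ) (x) :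
    symPowMap A p k (symMk A M k x) = symMk A N' k (PiTensorProduct.map (fun _ => p) x) :=
  rfl

lemma symMulByElem_mk (m₀ : M) (k : ℕ) (x) :
    symMulByElem A m₀ k (symMk A M k x) = symMk A M (k + 1) (consTensor A m₀ k x) :=
  rfl

lemma consTensor_tprod (m₀ : M) (k : ℕ) (v : Fin k → M) :
    consTensor A m₀ k (PiTensorProduct.tprod A v) = PiTensorProduct.tprod A (Fin.cons m₀ v) := by
  simp [consTensor]

lemma symMk_perm (k : ℕ) (v : Fin k → M) (σ : Equiv.Perm (Fin k)) :
    symMk A M k (PiTensorProduct.tprod A (v ∘ σ)) = symMk A M k (PiTensorProduct.tprod A v) := by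
  rw [symMk, Submodule.mkQ_apply, Submodule.mkQ_apply, Submodule.Quotient.eq]
  have h : PiTensorProduct.tprod A v - PiTensorProduct.tprod A (v ∘ σ) ∈ symRel A M k :=
    Submodule.subset_span ⟨v, σ, rfl⟩
  simpa [neg_sub] using Submodule.neg_mem _ h

lemma symPow_span_tprod (k : ℕ) :
    Submodule.span A (Set.range fun v : Fin k → M => symMk A M k (PiTensorProduct.tprod A v)) = ⊤ := by
  rw [Submodule.eq_top_iff']
  intro x
  obtain ⟨t, rfl⟩ : ∃ t, symMk A M k t = x := Submodule.mkQ_surjective _ x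
  induction t using PiTensorProduct.induction_on with
  | smul_tprod r v =>
      rw [map_smul]
      exact Submodule.smul_mem _ _ (Submodule.subset_span ⟨v, rfl⟩)
  | add x y ihx ihy => rw [map_add]; exact Submodule.add_mem _ ihx ihy

/-- Induction principle : a property closed under the module operations that holds on all
`symMk (tprod v)` holds everywhere. -/
lemma symPow_induction {k : ℕ} {motive : SymPow A M k → Prop}
    (smul : ∀ (a : A) x, motive x → motive (a • x))
    (add : ∀ x y, motive x → motive y → motive (x + y))
    (tp : ∀ v : Fin k → M, motive (symMk A M k (PiTensorProduct.tprod A v)))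
    (x : SymPow A M k) : motive x := by
  obtain ⟨t, rfl⟩ : ∃ t, symMk A M k t = x := Submodule.mkQ_surjective _ x
  induction t using PiTensorProduct.induction_on with
  | smul_tprod r v => rw [map_smul]; exact smul r _ (tp v)
  | add x y ihx ihy => rw [map_add]; exact add _ _ ihx ihy

end Basic

section Words
variable {A}
variable {M : Type v} [AddCommGroup M] [Module A M] {ι : Type w} (b : Module.Basis ι A M)

/-- The image in `Sym^k M` of a word of basis vectors, recorded as a list (or `0` if the
length is wrong). -/
noncomputable def symWord (k : ℕ) (l : List ι) : SymPow A M k :=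
  if h : l.length = k then
    symMk A M k (PiTensorProduct.tprod A fun i : Fin k => b (l.get (Fin.cast h.symm i)))
  else 0

lemma symWord_cons (a : ι) (l : List ι) (k : ℕ) :
    symWord b (k + 1) (a :: l) = symMulByElem A (b a) k (symWord b k l) := by
  by_cases h : l.length = k
  · simp only [symWord]
    rw [dif_pos h, dif_pos (show (a :: l).length = k + 1 by simp [h]),
      symMulByElem_mk, consTensor_tprod]
    congr 1
    congr 1
    funext i
    refine Fin.cases ?_ (fun j => ?_) i
    · simp
    · simp [Fin.cons_succ, List.get]
  · simp only [symWord]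
    rw [dif_neg h, dif_neg (show ¬(a :: l).length = k + 1 by simpa using h), map_zero]

lemma symWord_perm {l₁ l₂ : List ι} (h : l₁.Perm l₂) : ∀ k, symWord b k l₁ = symWord b k l₂ := by
  induction h with
  | nil => intro k; rfl
  | cons a h ih =>
      intro k
      cases k with
      | zero => simp [symWord]
      | succ k => rw [symWord_cons, symWord_cons, ih]
  | swap x y l =>
      intro k
      by_cases h : l.length + 2 = k
      · subst h
        simp only [symWord]
        rw [dif_pos (show (y :: x :: l).length = l.length + 2 from rfl),
          dif_pos (show (x :: y :: l).length = l.length + 2 from rfl)]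
        rw [← symMk_perm _ _ (Equiv.swap 0 1)]
        congr 1
        congr 1
        funext i
        refine Fin.cases ?_ (fun j => ?_) i
        · simp [Equiv.swap_apply_left]
        · refine Fin.cases ?_ (fun j' => ?_) j
          · simp [Fin.succ_zero_eq_one, Equiv.swap_apply_right]
          · have h0 : j'.succ.succ ≠ (0 : Fin (l.length + 2)) := Fin.succ_ne_zero _
            have h1 : j'.succ.succ ≠ (1 : Fin (l.length + 2)) := by
              rw [← Fin.succ_zero_eq_one]
              exact fun hh => Fin.succ_ne_zero _ (Fin.succ_injective _ hh)
            simp only [Function.comp_apply]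
            rw [Equiv.swap_apply_of_ne_of_ne h0 h1]
            rfl
      · simp only [symWord]
        rw [dif_neg (show ¬(y :: x :: l).length = k by simpa using h),
          dif_neg (show ¬(x :: y :: l).length = k by simpa using h)]
  | trans _ _ ih₁ ih₂ => intro k; rw [ih₁, ih₂]

/-- The image in `Sym^k M` of a multiset of basis indices. -/
noncomputable def symMulti (k : ℕ) (S : Multiset ι) : SymPow A M k :=
  Quotient.liftOn S (symWord b k) fun _ _ h => symWord_perm b h k

lemma symMulti_coe (k : ℕ) (l : List ι) : symMulti b k (↑l) = symWord b k l := rfl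

lemma symMulti_cons (k : ℕ) (a : ι) (S : Multiset ι) :
    symMulti b (k + 1) (a ::ₘ S) = symMulByElem A (b a) k (symMulti b k S) := by
  induction S using Quotient.inductionOn with
  | h l => exact symWord_cons b a l k

end Words

section Phi
variable {A}
variable {M : Type v} [AddCommGroup M] [Module A M] {ι : Type w} (b : Module.Basis ι A M)

/-- The linear embedding of `M` into polynomials, sending `b j` to `X j`. -/
noncomputable def ellMap : M →ₗ[A] MvPolynomial ι A :=
  (Finsupp.linearCombination A MvPolynomial.X) ∘ₗ (b.repr : M →ₗ[A] (ι →₀ A))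

lemma ellMap_basis (j : ι) : ellMap b (b j) = MvPolynomial.X j := by
  simp [ellMap]

/-- The algebra-style map `Sym^k M → MvPolynomial ι A`, product of coordinates. -/
noncomputable def phiMap (k : ℕ) : SymPow A M k →ₗ[A] MvPolynomial ι A :=
  Submodule.liftQ _ (PiTensorProduct.lift
      ((MultilinearMap.mkPiAlgebra A (Fin k) (MvPolynomial ι A)).compLinearMap fun _ => ellMap b))
    (by
      rw [symRel, Submodule.span_le]
      rintro x ⟨v, σ, rfl⟩
      simp only [SetLike.mem_coe, LinearMap.mem_ker, map_sub, PiTensorProduct.lift.tprod,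
        MultilinearMap.compLinearMap_apply, MultilinearMap.mkPiAlgebra_apply,
        Function.comp_apply]
      rw [Equiv.prod_comp σ fun i => ellMap b (v i), sub_self])

lemma phiMap_tprod (k : ℕ) (v : Fin k → M) :
    phiMap b k (symMk A M k (PiTensorProduct.tprod A v)) = ∏ i, ellMap b (v i) := by
  simp [phiMap, symMk]

/-- The element of `Sym^k M` attached to a monomial. -/
noncomputable def symMonomial (k : ℕ) (m : ι →₀ ℕ) : SymPow A M k :=
  symMulti b k m.toMultiset

/-- The linear map back from polynomials to `Sym^k M`. -/
noncomputable def psiMap (k : ℕ) : MvPolynomial ι A →ₗ[A] SymPow A M k :=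
  (Finsupp.linearCombination A (symMonomial b k)) ∘ₗ (MvPolynomial.basisMonomials ι A).repr.toLinearMap

lemma psiMap_monomial (k : ℕ) (m : ι →₀ ℕ) (a : A) :
    psiMap b k (MvPolynomial.monomial m a) = a • symMonomial b k m := by
  have h : (MvPolynomial.monomial m a : MvPolynomial ι A)
      = a • (MvPolynomial.basisMonomials ι A) m := by
    simp [MvPolynomial.coe_basisMonomials, MvPolynomial.smul_monomial]
  rw [psiMap, LinearMap.comp_apply, h, map_smul, map_smul]
  rw [LinearEquiv.coe_coe, Module.Basis.repr_self, Finsupp.linearCombination_single, one_smul]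

lemma prod_X_eq_monomial (k : ℕ) (g : Fin k → ι) :
    (∏ i, MvPolynomial.X (g i) : MvPolynomial ι A)
      = MvPolynomial.monomial (∑ i, Finsupp.single (g i) 1) (1 : A) := by
  induction k with
  | zero => simp
  | succ k ih =>
      rw [Fin.prod_univ_succ, ih (fun i => g i.succ), Fin.sum_univ_succ,
        MvPolynomial.X, MvPolynomial.monomial_mul, one_mul]

lemma toMultiset_sum_single (k : ℕ) (g : Fin k → ι) :
    Finsupp.toMultiset (∑ i, Finsupp.single (g i) 1) = (↑(List.ofFn g) : Multiset ι) := by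
  induction k with
  | zero => simp
  | succ k ih =>
      rw [Fin.sum_univ_succ, map_add, ih (fun i => g i.succ), List.ofFn_succ]
      simp [Multiset.singleton_add]

lemma psiMap_phiMap_word (k : ℕ) (g : Fin k → ι) :
    psiMap b k (phiMap b k (symMk A M k (PiTensorProduct.tprod A fun i => b (g i))))
      = symMk A M k (PiTensorProduct.tprod A fun i => b (g i)) := by
  rw [phiMap_tprod]
  simp only [ellMap_basis]
  rw [prod_X_eq_monomial, psiMap_monomial, one_smul, symMonomial, toMultiset_sum_single,
    symMulti_coe, symWord, dif_pos (List.length_ofFn (f := g))]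
  have hf : (fun i : Fin k => b ((List.ofFn g).get (Fin.cast (List.length_ofFn (f := g)).symm i)))
      = fun i => b (g i) := by
    funext i
    rw [List.get_ofFn]
    exact congrArg b (congrArg g (Fin.ext (by simp)))
  rw [hf]

lemma span_basis_words (k : ℕ) :
    Submodule.span A (Set.range fun g : Fin k → ι =>
      symMk A M k (PiTensorProduct.tprod A fun i => b (g i))) = ⊤ := by
  rw [Submodule.eq_top_iff']
  intro x
  induction x using symPow_induction with
  | smul a x hx => exact Submodule.smul_mem _ _ hx
  | add x y hx hy => exact Submodule.add_mem _ hx hy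
  | tp v =>
      have hv : ∀ i : Fin k, v i
          = ∑ j ∈ (b.repr (v i)).support, (b.repr (v i)) j • b j := by
        intro i
        conv_lhs => rw [← b.linearCombination_repr (v i)]
        rw [Finsupp.linearCombination_apply, Finsupp.sum]
      have key : (PiTensorProduct.tprod A) v
          = ∑ r ∈ Fintype.piFinset (fun i => (b.repr (v i)).support),
              (∏ i, (b.repr (v i)) (r i)) • PiTensorProduct.tprod A fun i => b (r i) := by
        conv_lhs => rw [show v = fun i => ∑ j ∈ (b.repr (v i)).support, (b.repr (v i)) j • b j
          from funext hv]
        rw [MultilinearMap.map_sum_finset (PiTensorProduct.tprod A)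
          (fun i j => (b.repr (v i)) j • b j) (fun i => (b.repr (v i)).support)]
        refine Finset.sum_congr rfl fun r _ => ?_
        rw [MultilinearMap.map_smul_univ]
      rw [key, map_sum]
      refine Submodule.sum_mem _ fun r _ => ?_
      rw [map_smul]
      exact Submodule.smul_mem _ _ (Submodule.subset_span ⟨r, rfl⟩)

lemma psiMap_phiMap (k : ℕ) (x : SymPow A M k) : psiMap b k (phiMap b k x) = x := by
  have hx : x ∈ (⊤ : Submodule A (SymPow A M k)) := Submodule.mem_top
  rw [← span_basis_words b k] at hx
  induction hx using Submodule.span_induction with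
  | mem x hx => obtain ⟨g, rfl⟩ := hx; exact psiMap_phiMap_word b k g
  | zero => simp
  | add x y _ _ hx hy => rw [map_add, map_add, hx, hy]
  | smul a x _ hx => rw [map_smul, map_smul, hx]

end Phi

section Helpers
variable {A}
variable {N : Type v} [AddCommGroup N] [Module A N] {P : Type v} [AddCommGroup P] [Module A P]
variable {κ : Type w}

lemma X_mul_cancel {σ : Type w} (t : σ) {f g : MvPolynomial σ A}
    (h : MvPolynomial.X t * f = MvPolynomial.X t * g) : f = g := by
  ext m
  have h2 := congrArg (MvPolynomial.coeff (Finsupp.single t 1 + m)) h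
  rwa [MvPolynomial.coeff_X_mul, MvPolynomial.coeff_X_mul] at h2

lemma phi_mul (e : A →ₗ[A] N) (bN : Module.Basis (Unit ⊕ κ) A N) (k : ℕ)
    (hbN0 : bN (Sum.inl ()) = e 1) (x : SymPow A N k) :
    phiMap bN (k + 1) (symMulByElem A (e 1) k x)
      = MvPolynomial.X (Sum.inl () : Unit ⊕ κ) * phiMap bN k x := by
  induction x using symPow_induction with
  | smul a x hx => simp only [map_smul]; rw [hx, Algebra.mul_smul_comm]
  | add x y hx hy => simp only [map_add]; rw [hx, hy, mul_add]
  | tp v =>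
      rw [symMulByElem_mk, consTensor_tprod, phiMap_tprod, phiMap_tprod, Fin.prod_univ_succ]
      simp only [Fin.cons_zero, Fin.cons_succ]
      rw [← hbN0, ellMap_basis]

lemma psi_mul (e : A →ₗ[A] N) (bN : Module.Basis (Unit ⊕ κ) A N) (k : ℕ)
    (hbN0 : bN (Sum.inl ()) = e 1) (f : MvPolynomial (Unit ⊕ κ) A) :
    psiMap bN (k + 1) (MvPolynomial.X (Sum.inl () : Unit ⊕ κ) * f)
      = symMulByElem A (e 1) k (psiMap bN k f) := by
  induction f using MvPolynomial.induction_on' with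
  | add f g hf hg => rw [mul_add, map_add, hf, hg, map_add, map_add]
  | monomial m a =>
      rw [MvPolynomial.X, MvPolynomial.monomial_mul, one_mul, psiMap_monomial, psiMap_monomial,
        map_smul]
      congr 1
      have hmt : (Finsupp.single (Sum.inl () : Unit ⊕ κ) 1 + m).toMultiset
          = (Sum.inl () : Unit ⊕ κ) ::ₘ m.toMultiset := by
        rw [Finsupp.toMultiset_add, Finsupp.toMultiset_single, one_nsmul,
          Multiset.singleton_add]
      rw [symMonomial, hmt, symMulti_cons, hbN0]
      rfl

/-- The coordinate projection on polynomial algebras, killing the variable `Sum.inl ()`. -/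
noncomputable def rhoMap : MvPolynomial (Unit ⊕ κ) A →ₐ[A] MvPolynomial κ A :=
  MvPolynomial.aeval (Sum.elim (fun _ => 0) MvPolynomial.X)

lemma phi_proj (p : N →ₗ[A] P) (bN : Module.Basis (Unit ⊕ κ) A N) (cP : Module.Basis κ A P) (k : ℕ)
    (hbN1 : ∀ j, p (bN (Sum.inr j)) = cP j) (hpe : p (bN (Sum.inl ())) = 0)
    (x : SymPow A N k) :
    phiMap cP k (symPowMap A p k x) = rhoMap (phiMap bN k x) := by
  have hcomm : ∀ n : N, ellMap cP (p n) = rhoMap (κ := κ) (ellMap bN n) := by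
    have h : (ellMap cP ∘ₗ p) = ((rhoMap (κ := κ)).toLinearMap ∘ₗ ellMap bN) := by
      apply bN.ext
      rintro (⟨⟩ | j)
      · simp [hpe, ellMap_basis, rhoMap]
      · simp [hbN1, ellMap_basis, rhoMap]
    exact fun n => LinearMap.congr_fun h n
  induction x using symPow_induction with
  | smul a x hx => simp only [map_smul]; rw [hx]
  | add x y hx hy => simp only [map_add]; rw [hx, hy]
  | tp v =>
      rw [symPowMap_mk, PiTensorProduct.map_tprod, phiMap_tprod, phiMap_tprod, map_prod]
      exact Finset.prod_congr rfl fun i _ => hcomm (v i)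

lemma rho_eq_zero {f : MvPolynomial (Unit ⊕ κ) A} (hf : rhoMap (κ := κ) f = 0) :
    ∃ g, f = MvPolynomial.X (Sum.inl () : Unit ⊕ κ) * g := by
  classical
  have key : ∀ f : MvPolynomial (Unit ⊕ κ) A,
      f - MvPolynomial.rename Sum.inr (rhoMap (κ := κ) f)
        ∈ LinearMap.range (LinearMap.mulLeft A (MvPolynomial.X (Sum.inl () : Unit ⊕ κ))) := by
    intro f
    induction f using MvPolynomial.induction_on' with
    | add f g hf hg =>
        have h3 := Submodule.add_mem _ hf hg
        rw [map_add, map_add] at *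
        convert h3 using 1
        abel
    | monomial m a =>
        by_cases hm : m (Sum.inl ()) = 0
        · have hfix : MvPolynomial.rename (Sum.inr : κ → Unit ⊕ κ)
              (rhoMap (κ := κ) (MvPolynomial.monomial m a)) = MvPolynomial.monomial m a := by
            have hcomp := MvPolynomial.comp_aeval (σ := Unit ⊕ κ)
              (Sum.elim (fun _ => (0 : MvPolynomial κ A)) MvPolynomial.X)
              (MvPolynomial.rename (Sum.inr : κ → Unit ⊕ κ))
            have h4 : MvPolynomial.rename (Sum.inr : κ → Unit ⊕ κ)
                (rhoMap (κ := κ) (MvPolynomial.monomial m a))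
                = MvPolynomial.aeval (fun i => MvPolynomial.rename (Sum.inr : κ → Unit ⊕ κ)
                    (Sum.elim (fun _ => (0 : MvPolynomial κ A)) MvPolynomial.X i))
                    (MvPolynomial.monomial m a) := by
              rw [rhoMap, ← AlgHom.comp_apply, hcomp]
            rw [h4, MvPolynomial.aeval_monomial]
            have h5 : (m.prod fun i k => (MvPolynomial.rename (Sum.inr : κ → Unit ⊕ κ)
                (Sum.elim (fun _ => (0 : MvPolynomial κ A)) MvPolynomial.X i)) ^ k)
                = m.prod fun i k => MvPolynomial.X i ^ k := by
              apply Finsupp.prod_congr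
              intro i hi
              rcases i with u | j
              · cases u
                exact absurd hm (Finsupp.mem_support_iff.mp hi)
              · rw [Sum.elim_inr, MvPolynomial.rename_X]
            rw [h5, MvPolynomial.algebraMap_eq, ← MvPolynomial.monomial_eq]
          rw [hfix, sub_self]
          exact Submodule.zero_mem _
        · obtain ⟨d, hd⟩ := Nat.exists_eq_succ_of_ne_zero hm
          have hz : rhoMap (κ := κ) (MvPolynomial.monomial m a) = 0 := by
            rw [rhoMap, MvPolynomial.aeval_monomial]
            have : (m.prod fun i k =>
                (Sum.elim (fun _ => (0 : MvPolynomial κ A)) MvPolynomial.X i) ^ k) = 0 := by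
              rw [Finsupp.prod]
              refine Finset.prod_eq_zero (Finsupp.mem_support_iff.mpr hm) ?_
              rw [Sum.elim_inl, hd, zero_pow (Nat.succ_ne_zero d)]
            rw [this, mul_zero]
          rw [hz, map_zero, sub_zero]
          refine ⟨MvPolynomial.monomial (m - Finsupp.single (Sum.inl ()) 1) a, ?_⟩
          rw [LinearMap.mulLeft_apply, MvPolynomial.X, MvPolynomial.monomial_mul, one_mul]
          have hsum : Finsupp.single (Sum.inl () : Unit ⊕ κ) 1
              + (m - Finsupp.single (Sum.inl ()) 1) = m := by
            ext i
            rw [Finsupp.add_apply, Finsupp.tsub_apply]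
            by_cases hi : (Sum.inl () : Unit ⊕ κ) = i
            · subst hi
              simp [Finsupp.single_apply]
              omega
            · simp only [Finsupp.single_apply, if_neg hi]
              omega
          rw [hsum]
  obtain ⟨g, hg⟩ := key f
  rw [hf, map_zero, sub_zero] at hg
  exact ⟨g, by rw [← hg, LinearMap.mulLeft_apply]⟩

end Helpers


/-- If `0 → A → N → P → 0` is a short exact sequence of free `A`-modules, then for every
`k ≥ 1` the induced sequence `0 → Sym^{k−1} N → Sym^k N → Sym^k P → 0` is exact, where
the first map is multiplication by `e(1)` and the second is `Sym^k p`.  (The natural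
number `k` below corresponds to `k − 1` in this formulation.) -/
theorem symPow_of_short_exact_sequence
    (N : Type v) [AddCommGroup N] [Module A N] [Module.Free A N]
    (P : Type v) [AddCommGroup P] [Module A P] [Module.Free A P]
    (e : A →ₗ[A] N) (p : N →ₗ[A] P)
    (hinj : Function.Injective e)
    (hexact : Function.Exact e p)
    (hsurj : Function.Surjective p) :
    ∀ k : ℕ,
      Function.Injective (symMulByElem A (e 1) k) ∧
      Function.Exact (symMulByElem A (e 1) k) (symPowMap A p (k + 1)) ∧
      Function.Surjective (symPowMap A p (k + 1)) := by
  classical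
  intro k
  -- Choose a basis of `P` and a section of `p`.
  set cP : Module.Basis (Module.Free.ChooseBasisIndex A P) A P := Module.Free.chooseBasis A P with hcP
  set s : P →ₗ[A] N := cP.constr A fun j => (hsurj (cP j)).choose with hs
  have hps : ∀ x, p (s x) = x := by
    have h : p ∘ₗ s = LinearMap.id := by
      refine cP.ext fun j => ?_
      rw [LinearMap.comp_apply, hs, Module.Basis.constr_basis, LinearMap.id_apply]
      exact (hsurj (cP j)).choose_spec
    exact fun x => LinearMap.congr_fun h x
  have hpe : ∀ a : A, p (e a) = 0 := fun a => hexact.apply_apply_eq_zero a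
  -- The splitting gives an adapted basis of `N`.
  have hbij : Function.Bijective (e.coprod s) := by
    constructor
    · rintro ⟨a₁, x₁⟩ ⟨a₂, x₂⟩ h
      simp only [LinearMap.coprod_apply] at h
      have hx : x₁ = x₂ := by
        have h2 := congrArg p h
        simpa [map_add, hpe, hps] using h2
      subst hx
      have he : e a₁ = e a₂ := by
        have h3 := congrArg (fun z => z - s x₁) h
        simpa using h3
      exact Prod.ext (hinj he) rfl
    · intro n
      obtain ⟨a, ha⟩ := (hexact (n - s (p n))).1 (by rw [map_sub, hps, sub_self])
      refine ⟨(a, p n), ?_⟩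
      simp only [LinearMap.coprod_apply]
      rw [ha]
      abel
  set φ : (A × P) ≃ₗ[A] N := LinearEquiv.ofBijective (e.coprod s) hbij with hφ
  set bN : Module.Basis (Unit ⊕ Module.Free.ChooseBasisIndex A P) A N :=
    ((Module.Basis.singleton Unit A).prod cP).map φ with hbN
  have hφap : ∀ z, φ z = e z.1 + s z.2 := fun z => rfl
  have hbN0 : bN (Sum.inl ()) = e 1 := by
    rw [hbN, Module.Basis.map_apply, hφap, Module.Basis.prod_apply_inl_fst, Module.Basis.prod_apply_inl_snd,
      Module.Basis.singleton_apply, map_zero, add_zero]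
  have hbN1 : ∀ j, p (bN (Sum.inr j)) = cP j := by
    intro j
    rw [hbN, Module.Basis.map_apply, hφap, Module.Basis.prod_apply_inr_fst, Module.Basis.prod_apply_inr_snd,
      map_zero, zero_add, hps]
  have hpe1 : p (bN (Sum.inl ())) = 0 := by rw [hbN0]; exact hpe 1
  refine ⟨?_, ?_, ?_⟩
  · -- injectivity of multiplication by `e 1`
    intro x y hxy
    have h1 := congrArg (phiMap bN (k + 1)) hxy
    rw [phi_mul e bN k hbN0, phi_mul e bN k hbN0] at h1
    have h2 := X_mul_cancel (Sum.inl ()) h1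
    calc x = psiMap bN k (phiMap bN k x) := (psiMap_phiMap bN k x).symm
      _ = psiMap bN k (phiMap bN k y) := by rw [h2]
      _ = y := psiMap_phiMap bN k y
  · -- exactness in the middle
    intro y
    constructor
    · intro hy
      have hz : rhoMap (phiMap bN (k + 1) y) = 0 := by
        rw [← phi_proj p bN cP (k + 1) hbN1 hpe1 y, hy, map_zero]
      obtain ⟨g, hg⟩ := rho_eq_zero hz
      refine ⟨psiMap bN k g, ?_⟩
      rw [← psi_mul e bN k hbN0 g, ← hg, psiMap_phiMap]
    · rintro ⟨x, rfl⟩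
      induction x using symPow_induction with
      | smul a x hx => simp only [map_smul]; rw [hx, smul_zero]
      | add x y hx hy => simp only [map_add]; rw [hx, hy, add_zero]
      | tp v =>
          rw [symMulByElem_mk, consTensor_tprod, symPowMap_mk, PiTensorProduct.map_tprod]
          have hzero : (fun i => p ((Fin.cons (e 1) v : Fin (k + 1) → N) i))
              = Fin.cons (0 : P) fun i => p (v i) := by
            funext i
            refine Fin.cases ?_ (fun j => ?_) i
            · simp [hpe 1]
            · simp
          rw [hzero, MultilinearMap.map_coord_zero (PiTensorProduct.tprod A) 0 (by simp),
            map_zero]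
  · -- surjectivity of `Sym^{k+1} p`
    intro y
    obtain ⟨t, rfl⟩ : ∃ t, symMk A P (k + 1) t = y := Submodule.mkQ_surjective _ y
    induction t using PiTensorProduct.induction_on with
    | smul_tprod r v =>
        choose w hw using fun i => hsurj (v i)
        refine ⟨symMk A N (k + 1) (r • PiTensorProduct.tprod A w), ?_⟩
        have hfun : (fun i => p (w i)) = v := funext hw
        rw [symPowMap_mk, map_smul, PiTensorProduct.map_tprod, hfun, map_smul]
    | add x y ihx ihy =>
        obtain ⟨x', hx'⟩ := ihx
        obtain ⟨y', hy'⟩ := ihy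
        exact ⟨x' + y', by rw [map_add, hx', hy', map_add]⟩

end Stmt4
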